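/- Let q ≡ 3 mod 4 and k ≡ 0 mod 4. For any subset W of F_q^k, the number e(W,W) of ordered pairs (x,y) ∈ W × W with -(x_1-y_1)² + (x_2-y_2)² + ... + (x_k-y_k)² = 0 satisfies e(W,W) ≤ |W|²/q + q^{(k-2)/2}|W|. -/

import Mathlib

open Finset

open AddChar

section Aux

variable {F : Type*} [Field F] [Fintype F] [DecidableEq F]

/-- Quadratic character composed into ℂ. -/
noncomputable def qchar (F : Type*) [Field F] [Fintype F] [DecidableEq F] : MulChar F ℂ :=
  (quadraticChar F).ringHomComp (Int.castRingHom ℂ)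

lemma psi_map_sum {ι : Type*} (ψ : AddChar F ℂ) (s : Finset ι) (f : ι → F) :
    ψ (∑ i ∈ s, f i) = ∏ i ∈ s, ψ (f i) := by
  induction s using Finset.cons_induction with
  | empty => simp
  | cons i s hi ih => rw [Finset.sum_cons, Finset.prod_cons, map_add_eq_mul, ih]

lemma qchar_ne_one (hF : ringChar F ≠ 2) : qchar F ≠ 1 :=
  (MulChar.ringHomComp_ne_one_iff (fun a b h => by simpa using h)).mpr
    (quadraticChar_ne_one hF)

lemma qchar_isQuadratic : (qchar F).IsQuadratic :=
  (quadraticChar_isQuadratic F).comp _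

lemma qchar_sq_one {c : F} (hc : c ≠ 0) : qchar F c * qchar F c = 1 := by
  simp only [qchar, MulChar.ringHomComp_apply]
  rw [← map_mul, ← map_one (Int.castRingHom ℂ)]
  exact congrArg _ (by rw [← pow_two]; exact quadraticChar_sq_one hc)

lemma sum_psi_sq (hF : ringChar F ≠ 2) {ψ : AddChar F ℂ} (hψ : ψ.IsPrimitive) {c : F}
    (hc : c ≠ 0) : ∑ z : F, ψ (c * z ^ 2) = qchar F c * gaussSum (qchar F) ψ := by
  have fib : ∑ z : F, ψ (c * z ^ 2)
      = ∑ a : F, ∑ z ∈ univ.filter (fun z : F => z ^ 2 = a), ψ (c * z ^ 2) :=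
    (Finset.sum_fiberwise_of_maps_to (fun x _ => mem_univ _) _).symm
  rw [fib]
  have step : ∀ a : F, ∑ z ∈ univ.filter (fun z : F => z ^ 2 = a), ψ (c * z ^ 2)
      = ((quadraticChar F a : ℂ) + 1) * ψ (c * a) := by
    intro a
    rw [Finset.sum_congr rfl (fun z hz => by
      rw [(Finset.mem_filter.mp hz).2]), Finset.sum_const, nsmul_eq_mul]
    congr 1
    have h := quadraticChar_card_sqrts hF a
    have : {x : F | x ^ 2 = a}.toFinset = univ.filter (fun z : F => z ^ 2 = a) := by
      ext x; simp
    rw [this] at h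
    have := congrArg (Int.cast : ℤ → ℂ) h
    push_cast at this
    rw [this]
  simp_rw [step, add_mul, one_mul, Finset.sum_add_distrib]
  have h2 : ∑ a : F, ψ (c * a) = 0 := by
    simp_rw [mul_comm c]
    rw [sum_mulShift c hψ]
    simp [hc]
  rw [h2, add_zero]
  have : ∑ a : F, (quadraticChar F a : ℂ) * ψ (c * a) = gaussSum (qchar F) (mulShift ψ c) := by
    simp [gaussSum, qchar, mulShift_apply]
  rw [this]
  have hcu : IsUnit c := hc.isUnit
  have := gaussSum_mulShift (qchar F) ψ hcu.unit
  have h3 : (hcu.unit : F) = c := rfl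
  rw [h3] at this
  calc gaussSum (qchar F) (mulShift ψ c)
      = (qchar F c * qchar F c) * gaussSum (qchar F) (mulShift ψ c) := by
        rw [qchar_sq_one hc, one_mul]
    _ = qchar F c * gaussSum (qchar F) ψ := by rw [mul_assoc, this]

end Aux

section Aux2

variable {F : Type*} [Field F] [Fintype F] [DecidableEq F]

lemma card_odd (hq : Fintype.card F % 4 = 3) : ringChar F ≠ 2 := by
  intro h
  have h1 := FiniteField.even_card_of_char_two h
  have h2 := Nat.mod_mod_of_dvd (Fintype.card F) (by norm_num : 2 ∣ 4)
  omega

lemma fqTwo_ne_zero (hq : Fintype.card F % 4 = 3) : (2 : F) ≠ 0 :=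
  Ring.two_ne_zero (card_odd hq)

lemma fqFour_ne_zero (hq : Fintype.card F % 4 = 3) : (4 : F) ≠ 0 := by
  have h := fqTwo_ne_zero (F := F) hq
  have : (4 : F) = 2 * 2 := by norm_num
  rw [this]
  exact mul_ne_zero h h

lemma qchar_neg_one (hq : Fintype.card F % 4 = 3) : qchar F (-1) = -1 := by
  have h := quadraticChar_neg_one (card_odd (F := F) hq)
  rw [ZMod.χ₄_nat_eq_if_mod_four] at h
  have h2 := Nat.mod_mod_of_dvd (Fintype.card F) (by norm_num : 2 ∣ 4)
  rw [if_neg (by omega), if_neg (by omega)] at h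
  simp only [qchar, MulChar.ringHomComp_apply, h]
  norm_num

lemma gauss_sq (hq : Fintype.card F % 4 = 3) {ψ : AddChar F ℂ} (hψ : ψ.IsPrimitive) :
    gaussSum (qchar F) ψ ^ 2 = -(Fintype.card F : ℂ) := by
  rw [gaussSum_sq (qchar_ne_one (card_odd hq)) qchar_isQuadratic hψ, qchar_neg_one hq]
  ring

lemma sum_psi_quad_linear (hq : Fintype.card F % 4 = 3) {ψ : AddChar F ℂ}
    (hψ : ψ.IsPrimitive) {c : F} (hc : c ≠ 0) (b : F) :
    ∑ z : F, ψ (c * z ^ 2 + b * z)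
      = ψ (-(b ^ 2) / (4 * c)) * (qchar F c * gaussSum (qchar F) ψ) := by
  have h2 : (2 : F) ≠ 0 := fqTwo_ne_zero (F := F) hq
  have h4 : (4 : F) ≠ 0 := fqFour_ne_zero (F := F) hq
  have key : ∑ z : F, ψ (c * z ^ 2 + b * z)
      = ∑ w : F, ψ (-(b ^ 2) / (4 * c)) * ψ (c * w ^ 2) := by
    apply Fintype.sum_equiv (Equiv.addRight (b / (2 * c)))
    intro z
    rw [← map_add_eq_mul]
    congr 1
    simp only [Equiv.coe_addRight]
    have h2c : (2 : F) * c ≠ 0 := mul_ne_zero h2 hc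
    field_simp
    ring
  rw [key, ← Finset.mul_sum, sum_psi_sq (card_odd hq) hψ hc]

end Aux2

section Multi

variable {F : Type*} [Field F] [Fintype F] [DecidableEq F] {k : ℕ}

/-- sign vector for the form `Q`. -/
def epsv (i0 : Fin k) : Fin k → F := fun i => if i = i0 then -1 else 1

/-- The quadratic form. -/
def Qform (i0 : Fin k) (z : Fin k → F) : F := ∑ i, epsv i0 i * z i ^ 2

/-- dot product. -/
def dotp (ξ z : Fin k → F) : F := ∑ i, ξ i * z i

lemma epsv_ne_zero (i0 i : Fin k) : epsv (F := F) i0 i ≠ 0 := by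
  unfold epsv; split <;> simp

lemma epsv_sq (i0 i : Fin k) : epsv (F := F) i0 i * epsv i0 i = 1 := by
  unfold epsv; split <;> norm_num

lemma sum_prod_swap (f : Fin k → F → ℂ) :
    ∑ z : Fin k → F, ∏ i, f i (z i) = ∏ i, ∑ u : F, f i u := by
  rw [Finset.prod_univ_sum]
  rw [← Fintype.piFinset_univ]

lemma delta_vec {ψ : AddChar F ℂ} (hψ : ψ.IsPrimitive) (a : Fin k → F) :
    ∑ ξ : Fin k → F, ψ (dotp ξ a) = if a = 0 then ((Fintype.card F : ℂ)) ^ k else 0 := by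
  have : ∀ ξ : Fin k → F, ψ (dotp ξ a) = ∏ i, ψ (ξ i * a i) := fun ξ => psi_map_sum ψ _ _
  simp_rw [this]
  rw [sum_prod_swap (fun i u => ψ (u * a i))]
  by_cases ha : a = 0
  · subst ha
    simp [Finset.card_univ]
  · obtain ⟨i, hi⟩ : ∃ i, a i ≠ 0 := by
      by_contra h
      push_neg at h
      exact ha (funext h)
    rw [if_neg ha]
    apply Finset.prod_eq_zero (Finset.mem_univ i)
    rw [sum_mulShift _ hψ, if_neg hi]
    exact Nat.cast_zero

lemma gauss_vec (hq : Fintype.card F % 4 = 3) {ψ : AddChar F ℂ} (hψ : ψ.IsPrimitive)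
    (i0 : Fin k) (hk4 : k % 4 = 0) {t : F} (ht : t ≠ 0) (ξ : Fin k → F) :
    ∑ z : Fin k → F, ψ (t * Qform i0 z - dotp ξ z)
      = ψ (-(Qform i0 ξ) / (4 * t)) * (-((Fintype.card F : ℂ)) ^ (k / 2)) := by
  set G := gaussSum (qchar F) ψ with hG
  have step1 : ∀ z : Fin k → F,
      ψ (t * Qform i0 z - dotp ξ z) = ∏ i, ψ (t * epsv i0 i * z i ^ 2 + (-ξ i) * z i) := by
    intro z
    rw [← psi_map_sum]
    congr 1
    rw [Qform, dotp, Finset.mul_sum, ← Finset.sum_sub_distrib]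
    exact Finset.sum_congr rfl (fun i _ => by ring)
  simp_rw [step1]
  rw [sum_prod_swap (fun i u => ψ (t * epsv i0 i * u ^ 2 + (-ξ i) * u))]
  have step2 : ∀ i, ∑ u : F, ψ (t * epsv i0 i * u ^ 2 + (-ξ i) * u)
      = ψ (-((-ξ i) ^ 2) / (4 * (t * epsv i0 i))) * (qchar F (t * epsv i0 i) * G) := fun i =>
    sum_psi_quad_linear hq hψ (mul_ne_zero ht (epsv_ne_zero i0 i)) _
  simp_rw [step2]
  rw [Finset.prod_mul_distrib, Finset.prod_mul_distrib]
  have h4 : (4 : F) ≠ 0 := fqFour_ne_zero (F := F) hq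
  have e1 : ∏ i, ψ (-((-ξ i) ^ 2) / (4 * (t * epsv i0 i))) = ψ (-(Qform i0 ξ) / (4 * t)) := by
    rw [← psi_map_sum]
    congr 1
    have : ∀ i, -((-ξ i) ^ 2) / (4 * (t * epsv i0 i))
        = (epsv i0 i * ξ i ^ 2) * (-(1 : F) / (4 * t)) := by
      intro i
      have he := epsv_sq (F := F) i0 i
      have hne := epsv_ne_zero (F := F) i0 i
      have hsq : (epsv (F := F) i0 i) ^ 2 = 1 := by rw [pow_two]; exact he
      field_simp
      ring_nf
      rw [hsq]
      ring
    simp_rw [this]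
    rw [← Finset.sum_mul, ← Qform]
    field_simp
  have e2 : ∏ i, qchar F (t * epsv i0 i) = -1 := by
    rw [← map_prod]
    have : ∏ i, (t * epsv (F := F) i0 i) = t ^ k * (-1) := by
      rw [Finset.prod_mul_distrib, Finset.prod_const, Finset.card_univ, Fintype.card_fin]
      congr 1
      unfold epsv
      rw [Finset.prod_ite_eq' Finset.univ i0 (fun _ => (-1 : F))]
      simp
    rw [this, map_mul, qchar_neg_one hq]
    have h1 : qchar F (t ^ k) = 1 := by
      rw [map_pow]
      have h2 : qchar F t ^ k = (qchar F t ^ 2) ^ (k / 2) := by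
        rw [← pow_mul]; congr 1; omega
      rw [h2, pow_two, qchar_sq_one ht, one_pow]
    rw [h1, one_mul]
  have e3 : ∏ _i : Fin k, G = ((Fintype.card F : ℂ)) ^ (k / 2) := by
    rw [Finset.prod_const, Finset.card_univ, Fintype.card_fin]
    have h1 : G ^ k = (G ^ 2) ^ (k / 2) := by rw [← pow_mul]; congr 1; omega
    rw [h1, gauss_sq hq hψ]
    exact Even.neg_pow ⟨k / 4, by omega⟩ _
  rw [e1, e2, e3]
  ring

end Multi

section Aux3

variable {F : Type*} [Field F] [Fintype F] [DecidableEq F] {k : ℕ}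

open Complex in
lemma conj_psi (ψ : AddChar F ℂ) (a : F) : (starRingEnd ℂ) (ψ a) = ψ (-a) := by
  have hpos : 0 < ringChar F :=
    Nat.pos_of_ne_zero (CharP.ringChar_ne_zero_of_finite F)
  rw [AddChar.starComp_apply hpos, AddChar.inv_apply]

lemma tsum_inv (hq : Fintype.card F % 4 = 3) {ψ : AddChar F ℂ} (hψ : ψ.IsPrimitive) (c : F) :
    ∑ t ∈ Finset.univ.erase (0 : F), ψ (c / t)
      = (if c = 0 then (Fintype.card F : ℂ) else 0) - 1 := by
  have h1 : ∑ t ∈ Finset.univ.erase (0 : F), ψ (c / t)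
      = ∑ s ∈ Finset.univ.erase (0 : F), ψ (c * s) := by
    apply Finset.sum_nbij' (fun t => t⁻¹) (fun s => s⁻¹)
    · intro t ht
      simp only [Finset.mem_erase, Finset.mem_univ, and_true] at ht ⊢
      exact inv_ne_zero ht
    · intro s hs
      simp only [Finset.mem_erase, Finset.mem_univ, and_true] at hs ⊢
      exact inv_ne_zero hs
    · intro t _; exact inv_inv t
    · intro s _; exact inv_inv s
    · intro t ht
      simp only [Finset.mem_erase, Finset.mem_univ, and_true] at ht
      rw [div_eq_mul_inv]
  rw [h1]
  have h2 : ∑ s : F, ψ (c * s) = ψ (c * 0) + ∑ s ∈ Finset.univ.erase (0 : F), ψ (c * s) :=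
    (Finset.add_sum_erase _ _ (Finset.mem_univ 0)).symm
  have h3 : ∑ s : F, ψ (c * s) = if c = 0 then (Fintype.card F : ℂ) else 0 := by
    simp_rw [mul_comm c]
    rw [sum_mulShift c hψ]
    split <;> simp
  rw [h3] at h2
  rw [mul_zero, map_zero_eq_one] at h2
  rw [h2]
  ring

lemma dotp_sub (ξ a b : Fin k → F) : dotp ξ (a - b) = dotp ξ a - dotp ξ b := by
  simp [dotp, mul_sub, Finset.sum_sub_distrib]

end Aux3

section Aux4

variable {F : Type*} [Field F] [Fintype F] [DecidableEq F] {k : ℕ}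

lemma inv_t {ψ : AddChar F ℂ} (hψ : ψ.IsPrimitive) (i0 : Fin k) (t : F)
    (W : Finset (Fin k → F)) :
    ∑ ξ : Fin k → F, (∑ w : Fin k → F, ψ (t * Qform i0 w - dotp ξ w))
        * (∑ x ∈ W, ∑ y ∈ W, ψ (dotp ξ (x - y)))
      = (Fintype.card F : ℂ) ^ k * ∑ x ∈ W, ∑ y ∈ W, ψ (t * Qform i0 (x - y)) := by
  have hAB : ∀ (ξ w x y : Fin k → F),
      ψ (t * Qform i0 w - dotp ξ w) * ψ (dotp ξ (x - y))
        = ψ (t * Qform i0 w) * ψ (dotp ξ (x - y - w)) := by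
    intro ξ w x y
    rw [← map_add_eq_mul, ← map_add_eq_mul]
    congr 1
    simp only [dotp_sub]
    ring
  calc ∑ ξ : Fin k → F, (∑ w : Fin k → F, ψ (t * Qform i0 w - dotp ξ w))
        * (∑ x ∈ W, ∑ y ∈ W, ψ (dotp ξ (x - y)))
      = ∑ ξ : Fin k → F, ∑ w : Fin k → F, ∑ x ∈ W, ∑ y ∈ W,
          ψ (t * Qform i0 w) * ψ (dotp ξ (x - y - w)) := by
        simp_rw [Finset.sum_mul, Finset.mul_sum, hAB]
    _ = ∑ w : Fin k → F, ∑ x ∈ W, ∑ y ∈ W,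
          ψ (t * Qform i0 w) * ∑ ξ : Fin k → F, ψ (dotp ξ (x - y - w)) := by
        rw [Finset.sum_comm]
        refine Finset.sum_congr rfl fun w _ => ?_
        rw [Finset.sum_comm]
        refine Finset.sum_congr rfl fun x _ => ?_
        rw [Finset.sum_comm]
        refine Finset.sum_congr rfl fun y _ => ?_
        rw [Finset.mul_sum]
    _ = ∑ x ∈ W, ∑ y ∈ W, ∑ w : Fin k → F,
          ψ (t * Qform i0 w) * ∑ ξ : Fin k → F, ψ (dotp ξ (x - y - w)) := by
        rw [Finset.sum_comm]
        refine Finset.sum_congr rfl fun x _ => ?_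
        rw [Finset.sum_comm]
    _ = ∑ x ∈ W, ∑ y ∈ W, (Fintype.card F : ℂ) ^ k * ψ (t * Qform i0 (x - y)) := by
        refine Finset.sum_congr rfl fun x _ => Finset.sum_congr rfl fun y _ => ?_
        simp_rw [delta_vec hψ, sub_eq_zero, mul_ite, mul_zero]
        rw [Finset.sum_ite_eq Finset.univ (x - y)
          (fun w => ψ (t * Qform i0 w) * (Fintype.card F : ℂ) ^ k)]
        rw [if_pos (Finset.mem_univ _), mul_comm]
    _ = (Fintype.card F : ℂ) ^ k * ∑ x ∈ W, ∑ y ∈ W, ψ (t * Qform i0 (x - y)) := by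
        simp_rw [Finset.mul_sum]

end Aux4

section Aux5

variable {F : Type*} [Field F] [Fintype F] [DecidableEq F] {k : ℕ}

lemma WW_expand (ψ : AddChar F ℂ) (W : Finset (Fin k → F)) (ξ : Fin k → F) :
    (∑ x ∈ W, ψ (dotp ξ x)) * (starRingEnd ℂ) (∑ y ∈ W, ψ (dotp ξ y))
      = ∑ x ∈ W, ∑ y ∈ W, ψ (dotp ξ (x - y)) := by
  rw [map_sum]
  simp_rw [conj_psi]
  rw [Finset.sum_mul_sum]
  refine Finset.sum_congr rfl fun x _ => Finset.sum_congr rfl fun y _ => ?_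
  rw [← map_add_eq_mul]
  congr 1
  rw [dotp_sub]
  ring

lemma parseval {ψ : AddChar F ℂ} (hψ : ψ.IsPrimitive) (W : Finset (Fin k → F)) :
    ∑ ξ : Fin k → F, (∑ x ∈ W, ψ (dotp ξ x)) * (starRingEnd ℂ) (∑ y ∈ W, ψ (dotp ξ y))
      = (Fintype.card F : ℂ) ^ k * W.card := by
  simp_rw [WW_expand]
  have swap : ∑ ξ : Fin k → F, ∑ x ∈ W, ∑ y ∈ W, ψ (dotp ξ (x - y))
      = ∑ x ∈ W, ∑ y ∈ W, ∑ ξ : Fin k → F, ψ (dotp ξ (x - y)) := by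
    rw [Finset.sum_comm]
    exact Finset.sum_congr rfl fun x _ => Finset.sum_comm
  rw [swap]
  have step : ∀ x ∈ W, ∑ y ∈ W, ∑ ξ : Fin k → F, ψ (dotp ξ (x - y))
      = (Fintype.card F : ℂ) ^ k := by
    intro x hx
    simp_rw [delta_vec hψ, sub_eq_zero]
    rw [Finset.sum_ite_eq W x fun _ => (Fintype.card F : ℂ) ^ k, if_pos hx]
  calc ∑ x ∈ W, ∑ y ∈ W, ∑ ξ : Fin k → F, ψ (dotp ξ (x - y))
      = ∑ _x ∈ W, (Fintype.card F : ℂ) ^ k := Finset.sum_congr rfl step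
    _ = (Fintype.card F : ℂ) ^ k * W.card := by
        rw [Finset.sum_const, nsmul_eq_mul, mul_comm]

lemma K_sum (hq : Fintype.card F % 4 = 3) {ψ : AddChar F ℂ} (hψ : ψ.IsPrimitive)
    (i0 : Fin k) (hk4 : k % 4 = 0) (ξ : Fin k → F) :
    ∑ t ∈ Finset.univ.erase (0 : F), ∑ w : Fin k → F, ψ (t * Qform i0 w - dotp ξ w)
      = ((if Qform i0 ξ = 0 then (Fintype.card F : ℂ) else 0) - 1)
          * (-((Fintype.card F : ℂ)) ^ (k / 2)) := by
  have h4 : (4 : F) ≠ 0 := fqFour_ne_zero (F := F) hq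
  have step : ∀ t ∈ Finset.univ.erase (0 : F),
      ∑ w : Fin k → F, ψ (t * Qform i0 w - dotp ξ w)
        = ψ ((-(Qform i0 ξ) / 4) / t) * (-((Fintype.card F : ℂ)) ^ (k / 2)) := by
    intro t ht
    rw [gauss_vec hq hψ i0 hk4 (Finset.mem_erase.mp ht).1 ξ, div_div]
  rw [Finset.sum_congr rfl step, ← Finset.sum_mul]
  rw [tsum_inv hq hψ]
  congr 2
  exact if_congr (by rw [div_eq_zero_iff, neg_eq_zero]; simp [h4]) rfl rfl

end Aux5

open Complex in
/-- Expander mixing bound for the cone graph: for `q ≡ 3 mod 4`, `k ≡ 0 mod 4`, and any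
`W ⊆ F_q^k`, the number of ordered pairs `(x, y) ∈ W × W` with `Q(x - y) = 0`,
`Q(z) = -z₀² + z₁² + ⋯`, is at most `|W|²/q + q^{(k-2)/2}|W|`. -/
theorem cone_pair_count_bound {F : Type*} [Field F] [Fintype F] [DecidableEq F]
    (hq : Fintype.card F % 4 = 3) (k : ℕ) (hk : 0 < k) (hk4 : k % 4 = 0)
    (W : Finset (Fin k → F)) :
    (((W ×ˢ W).filter (fun p : (Fin k → F) × (Fin k → F) =>
        -(p.1 ⟨0, hk⟩ - p.2 ⟨0, hk⟩) ^ 2 +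
          ∑ i ∈ Finset.univ.erase ⟨0, hk⟩, (p.1 i - p.2 i) ^ 2 = 0)).card : ℝ)
      ≤ (W.card : ℝ) ^ 2 / (Fintype.card F : ℝ)
        + (Fintype.card F : ℝ) ^ ((k - 2) / 2) * W.card := by
  classical
  set q := Fintype.card F with hqdef
  have hq1 : 0 < q := Fintype.card_pos
  set i0 : Fin k := ⟨0, hk⟩ with hi0
  set ψ : AddChar F ℂ := FiniteField.primitiveChar_to_Complex F with hψdef
  have hψ : ψ.IsPrimitive := FiniteField.primitiveChar_to_Complex_isPrimitive F
  -- rewrite the filter condition in terms of `Qform`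
  have hcond : ∀ p : (Fin k → F) × (Fin k → F),
      (-(p.1 i0 - p.2 i0) ^ 2 + ∑ i ∈ Finset.univ.erase i0, (p.1 i - p.2 i) ^ 2 = 0)
        ↔ Qform i0 (p.1 - p.2) = 0 := by
    intro p
    have hQ : Qform i0 (p.1 - p.2)
        = -(p.1 i0 - p.2 i0) ^ 2 + ∑ i ∈ Finset.univ.erase i0, (p.1 i - p.2 i) ^ 2 := by
      rw [Qform, ← Finset.add_sum_erase _ _ (Finset.mem_univ i0)]
      congr 1
      · simp [epsv, Pi.sub_apply]
      · refine Finset.sum_congr rfl fun i hi => ?_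
        have hne : i ≠ i0 := (Finset.mem_erase.mp hi).1
        simp [epsv, hne, Pi.sub_apply]
    rw [hQ]
  have hNcard : ((W ×ˢ W).filter (fun p : (Fin k → F) × (Fin k → F) =>
        -(p.1 ⟨0, hk⟩ - p.2 ⟨0, hk⟩) ^ 2 +
          ∑ i ∈ Finset.univ.erase ⟨0, hk⟩, (p.1 i - p.2 i) ^ 2 = 0)).card
      = ((W ×ˢ W).filter (fun p : (Fin k → F) × (Fin k → F) =>
          Qform i0 (p.1 - p.2) = 0)).card := by
    congr 1
    exact Finset.filter_congr fun p _ => hcond p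
  rw [hNcard]
  set N := ((W ×ˢ W).filter (fun p : (Fin k → F) × (Fin k → F) =>
      Qform i0 (p.1 - p.2) = 0)).card with hN
  set T : ℂ := ∑ t ∈ Finset.univ.erase (0 : F), ∑ x ∈ W, ∑ y ∈ W,
      ψ (t * Qform i0 (x - y)) with hT
  -- Step 1: q * N = |W|^2 + T
  have key1 : (q : ℂ) * N = (W.card : ℂ) ^ 2 + T := by
    have htot : ∑ t : F, ∑ x ∈ W, ∑ y ∈ W, ψ (t * Qform i0 (x - y)) = (q : ℂ) * N := by
      have swap : ∑ t : F, ∑ x ∈ W, ∑ y ∈ W, ψ (t * Qform i0 (x - y))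
          = ∑ x ∈ W, ∑ y ∈ W, ∑ t : F, ψ (t * Qform i0 (x - y)) := by
        rw [Finset.sum_comm]
        exact Finset.sum_congr rfl fun x _ => Finset.sum_comm
      rw [swap]
      have inner : ∀ x y : Fin k → F, ∑ t : F, ψ (t * Qform i0 (x - y))
          = if Qform i0 (x - y) = 0 then (q : ℂ) else 0 := by
        intro x y
        rw [sum_mulShift _ hψ]
        split <;> simp [hqdef]
      simp_rw [inner]
      rw [← Finset.sum_product']
      rw [← Finset.sum_filter, Finset.sum_const, nsmul_eq_mul, mul_comm]
    have hsplit : ∑ t : F, ∑ x ∈ W, ∑ y ∈ W, ψ (t * Qform i0 (x - y))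
        = (∑ x ∈ W, ∑ y ∈ W, ψ ((0 : F) * Qform i0 (x - y))) + T :=
      (Finset.add_sum_erase _ _ (Finset.mem_univ (0 : F))).symm
    have h0 : ∑ x ∈ W, ∑ y ∈ W, ψ ((0 : F) * Qform i0 (x - y)) = (W.card : ℂ) ^ 2 := by
      simp [Finset.sum_const, pow_two]
    rw [← htot, hsplit, h0]
  -- Step 2: q^k * T = sum of real coefficients times |Wh|^2
  set Wh : (Fin k → F) → ℂ := fun ξ => ∑ x ∈ W, ψ (dotp ξ x) with hWh
  set Kr : (Fin k → F) → ℝ := fun ξ =>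
      ((if Qform i0 ξ = 0 then (q : ℝ) else 0) - 1) * (-((q : ℝ)) ^ (k / 2)) with hKr
  have key2 : (q : ℂ) ^ k * T
      = ∑ ξ : Fin k → F, ((Kr ξ : ℝ) : ℂ) * (Wh ξ * (starRingEnd ℂ) (Wh ξ)) := by
    rw [hT, Finset.mul_sum]
    calc ∑ t ∈ Finset.univ.erase (0 : F),
          (q : ℂ) ^ k * ∑ x ∈ W, ∑ y ∈ W, ψ (t * Qform i0 (x - y))
        = ∑ t ∈ Finset.univ.erase (0 : F), ∑ ξ : Fin k → F,
            (∑ w : Fin k → F, ψ (t * Qform i0 w - dotp ξ w))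
              * (∑ x ∈ W, ∑ y ∈ W, ψ (dotp ξ (x - y))) :=
          Finset.sum_congr rfl fun t _ => (inv_t hψ i0 t W).symm
      _ = ∑ ξ : Fin k → F,
            (∑ t ∈ Finset.univ.erase (0 : F), ∑ w : Fin k → F,
              ψ (t * Qform i0 w - dotp ξ w))
              * (∑ x ∈ W, ∑ y ∈ W, ψ (dotp ξ (x - y))) := by
          rw [Finset.sum_comm]
          exact Finset.sum_congr rfl fun ξ _ => (Finset.sum_mul _ _ _).symm
      _ = ∑ ξ : Fin k → F, ((Kr ξ : ℝ) : ℂ) * (∑ x ∈ W, ∑ y ∈ W, ψ (dotp ξ (x - y))) := by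
          refine Finset.sum_congr rfl fun ξ _ => ?_
          rw [K_sum hq hψ i0 hk4 ξ]
          congr 1
          rw [hKr]
          push_cast [apply_ite (fun r : ℝ => (r : ℂ))]
          ring
      _ = ∑ ξ : Fin k → F, ((Kr ξ : ℝ) : ℂ) * (Wh ξ * (starRingEnd ℂ) (Wh ξ)) := by
          refine Finset.sum_congr rfl fun ξ _ => ?_
          rw [hWh]
          rw [WW_expand ψ W ξ]
  -- realify
  have hWW : ∀ ξ : Fin k → F, Wh ξ * (starRingEnd ℂ) (Wh ξ) = ((normSq (Wh ξ) : ℝ) : ℂ) :=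
    fun ξ => Complex.mul_conj _
  have key2r : (q : ℝ) ^ k * ((q : ℝ) * N - (W.card : ℝ) ^ 2)
      = ∑ ξ : Fin k → F, Kr ξ * normSq (Wh ξ) := by
    apply Complex.ofReal_injective
    push_cast
    have hTval : T = (q : ℂ) * N - (W.card : ℂ) ^ 2 := by rw [key1]; ring
    calc (q : ℂ) ^ k * ((q : ℂ) * N - (W.card : ℂ) ^ 2)
        = (q : ℂ) ^ k * T := by rw [hTval]
      _ = ∑ ξ : Fin k → F, ((Kr ξ : ℝ) : ℂ) * (Wh ξ * (starRingEnd ℂ) (Wh ξ)) := key2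
      _ = ∑ ξ : Fin k → F, ((Kr ξ : ℝ) : ℂ) * ((normSq (Wh ξ) : ℝ) : ℂ) := by
          simp_rw [hWW]
  -- Parseval
  have hpars : ∑ ξ : Fin k → F, normSq (Wh ξ) = (q : ℝ) ^ k * W.card := by
    apply Complex.ofReal_injective
    push_cast
    calc ∑ ξ : Fin k → F, ((normSq (Wh ξ) : ℝ) : ℂ)
        = ∑ ξ : Fin k → F, Wh ξ * (starRingEnd ℂ) (Wh ξ) := by simp_rw [hWW]
      _ = (q : ℂ) ^ k * W.card := parseval hψ W
  -- bound the coefficient sum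
  have hqk2 : (0 : ℝ) ≤ (q : ℝ) ^ (k / 2) := by positivity
  have hbound : ∑ ξ : Fin k → F, Kr ξ * normSq (Wh ξ)
      ≤ (q : ℝ) ^ (k / 2) * ((q : ℝ) ^ k * W.card) := by
    rw [← hpars, Finset.mul_sum]
    apply Finset.sum_le_sum
    intro ξ _
    have hZ : (0 : ℝ) ≤ normSq (Wh ξ) := Complex.normSq_nonneg _
    have hK : Kr ξ ≤ (q : ℝ) ^ (k / 2) := by
      rw [hKr]
      simp only
      split_ifs with h
      · have hq1' : (1 : ℝ) ≤ (q : ℝ) := by exact_mod_cast hq1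
        nlinarith
      · ring_nf
        nlinarith
    exact mul_le_mul_of_nonneg_right hK hZ
  -- conclude
  have hqpos : (0 : ℝ) < (q : ℝ) := by exact_mod_cast hq1
  have hqkpos : (0 : ℝ) < (q : ℝ) ^ k := by positivity
  have hmain : (q : ℝ) * N - (W.card : ℝ) ^ 2 ≤ (q : ℝ) ^ (k / 2) * W.card := by
    have h1 : (q : ℝ) ^ k * ((q : ℝ) * N - (W.card : ℝ) ^ 2)
        ≤ (q : ℝ) ^ k * ((q : ℝ) ^ (k / 2) * W.card) := by
      rw [key2r]
      calc ∑ ξ : Fin k → F, Kr ξ * normSq (Wh ξ)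
          ≤ (q : ℝ) ^ (k / 2) * ((q : ℝ) ^ k * W.card) := hbound
        _ = (q : ℝ) ^ k * ((q : ℝ) ^ (k / 2) * W.card) := by ring
    exact le_of_mul_le_mul_left h1 hqkpos
  have hksplit : (q : ℝ) ^ (k / 2) = (q : ℝ) * (q : ℝ) ^ ((k - 2) / 2) := by
    have : k / 2 = (k - 2) / 2 + 1 := by omega
    rw [this, pow_succ]
    ring
  have hfinal : (q : ℝ) * N ≤ (W.card : ℝ) ^ 2 + (q : ℝ) * ((q : ℝ) ^ ((k - 2) / 2) * W.card) := by
    have := hmain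
    rw [hksplit] at this
    nlinarith
  calc (N : ℝ) = (q : ℝ) * N / q := by field_simp
    _ ≤ ((W.card : ℝ) ^ 2 + (q : ℝ) * ((q : ℝ) ^ ((k - 2) / 2) * W.card)) / q := by
        gcongr
    _ = (W.card : ℝ) ^ 2 / q + (q : ℝ) ^ ((k - 2) / 2) * W.card := by
        field_simp
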